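/- Assume C satisfies condition (⋆). The following are equivalent: (1) C is B-normal; (2) for all distinct maximal elements p,q of C there exists a complemented a ∈ C with a ≤ p and a⊥ ≤ q; (3) for all distinct maximal elements p,q of C there exists a complemented a ∈ C with a ≤ O(p) and a⊥ ≤ O(q). -/

import Mathlib

open CompleteLattice

/-- A complete lattice equipped with a commutator operation, axiomatizing the congruence
lattice of an algebra in a semidegenerate congruence-modular variety whose compact
congruences are closed under the commutator. -/
class CommutatorLattice (C : Type*) [CompleteLattice C] where
  comm : C → C → C
  comm_comm : ∀ a b : C, comm a b = comm b a
  comm_sSup : ∀ (s : Set C) (b : C), comm (sSup s) b = ⨆ a ∈ s, comm a b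
  comm_le_inf : ∀ a b : C, comm a b ≤ a ⊓ b
  comm_top : ∀ a : C, comm a ⊤ = a
  compactlyGenerated : ∀ x : C,
    ∃ s : Set C, (∀ a ∈ s, IsCompactElement a) ∧ sSup s = x
  top_isCompact : IsCompactElement (⊤ : C)
  comm_isCompact : ∀ a b : C, IsCompactElement a → IsCompactElement b →
    IsCompactElement (comm a b)

namespace CommutatorLattice

variable {C : Type*} [CompleteLattice C] [CommutatorLattice C]

/-- The residuation `a → b := ⨆ {c | [a,c] ≤ b}`. -/
def resid (a b : C) : C := sSup {c : C | comm a c ≤ b}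

/-- The annihilator `a⊥ := a → ⊥`. -/
def ann (a : C) : C := resid a ⊥

/-- Iterated commutator: `cpow a n = [a,a]^n`, with the convention `[a,a]^0 = a`.
Note that `[a,b]^n` for `n ≥ 1` equals `cpow (comm a b) (n-1)`. -/
def cpow (a : C) : ℕ → C
  | 0 => a
  | n + 1 => comm (cpow a n) (cpow a n)

/-- Prime elements: `p ≠ ⊤` and `[a,b] ≤ p` implies `a ≤ p` or `b ≤ p`. -/
def IsPrime (p : C) : Prop := p ≠ ⊤ ∧ ∀ a b : C, comm a b ≤ p → a ≤ p ∨ b ≤ p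

/-- The radical `ρ(a) := ⨅ {p prime | a ≤ p}`. -/
def radical (a : C) : C := sInf {p : C | IsPrime p ∧ a ≤ p}

variable (C) in
/-- `C` is semiprime if `ρ(⊥) = ⊥`. -/
def Semiprime : Prop := radical (⊥ : C) = ⊥

variable (C) in
/-- Condition (⋆): for all compact `a`, `b` and all `n ≥ 1` there is `m ≥ 0` with
`[[a,a]^m, [b,b]^m] ≤ [a,b]^n`.  Here `cpow (comm a b) n = [a,b]^(n+1)`, so `n : ℕ`
ranges exactly over the exponents `≥ 1` of the paper. -/
def Star : Prop := ∀ a b : C, IsCompactElement a → IsCompactElement b →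
  ∀ n : ℕ, ∃ m : ℕ, comm (cpow a m) (cpow b m) ≤ cpow (comm a b) n

/-- Pure elements: `t ⊔ a⊥ = ⊤` for every compact `a ≤ t`. -/
def IsPure (t : C) : Prop := ∀ a : C, IsCompactElement a → a ≤ t → t ⊔ ann a = ⊤

/-- w-pure elements: `t ⊔ (a → ρ(⊥)) = ⊤` for every compact `a ≤ t`. -/
def IsWPure (t : C) : Prop :=
  ∀ a : C, IsCompactElement a → a ≤ t → t ⊔ resid a (radical ⊥) = ⊤

/-- Complemented elements. -/
def IsComplEl (a : C) : Prop := ∃ b : C, a ⊔ b = ⊤ ∧ a ⊓ b = ⊥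

/-- Regular elements: joins of sets of complemented elements. -/
def IsRegular (t : C) : Prop := ∃ S : Set C, (∀ a ∈ S, IsComplEl a) ∧ t = sSup S

/-- Max-regular elements: maximal among regular elements distinct from `⊤`. -/
def IsMaxRegular (t : C) : Prop :=
  IsRegular t ∧ t ≠ ⊤ ∧ ∀ u : C, IsRegular u → u ≠ ⊤ → t ≤ u → u = t

/-- Maximal elements of `C \ {⊤}`. -/
def IsMaximal (p : C) : Prop := p ≠ ⊤ ∧ ∀ q : C, q ≠ ⊤ → p ≤ q → q = p

/-- Minimal primes. -/
def IsMinPrime (p : C) : Prop := IsPrime p ∧ ∀ q : C, IsPrime q → q ≤ p → q = p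

variable (C) in
/-- `C` is mp if every prime lies above a unique minimal prime. -/
def MP : Prop := ∀ p : C, IsPrime p → ∃! q : C, IsMinPrime q ∧ q ≤ p

variable (C) in
/-- `C` is PF if `a⊥` is pure for every compact `a`. -/
def PF : Prop := ∀ a : C, IsCompactElement a → IsPure (ann a)

variable (C) in
/-- `C` is PP if `a⊥` is complemented for every compact `a`. -/
def PP : Prop := ∀ a : C, IsCompactElement a → IsComplEl (ann a)

/-- `O(p) := ⨆ {a compact | a⊥ ≰ p}`. -/
def O (p : C) : C := sSup {a : C | IsCompactElement a ∧ ¬ ann a ≤ p}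

variable (C) in
/-- `C` is normal. -/
def Normal : Prop := ∀ t u : C, t ⊔ u = ⊤ →
  ∃ a b : C, t ⊔ a = ⊤ ∧ u ⊔ b = ⊤ ∧ comm a b = ⊥

variable (C) in
/-- `C` is B-normal. -/
def BNormal : Prop := ∀ t u : C, t ⊔ u = ⊤ →
  ∃ a b : C, IsComplEl a ∧ IsComplEl b ∧ t ⊔ a = ⊤ ∧ u ⊔ b = ⊤ ∧ comm a b = ⊥

variable (C) in
/-- `C` is purified. -/
def Purified : Prop := ∀ p q : C, IsMinPrime p → IsMinPrime q → p ≠ q →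
  ∃ a : C, IsComplEl a ∧ a ≤ p ∧ ann a ≤ q

variable (C) in
/-- The prime spectrum of `C`. -/
abbrev Spec := {p : C // IsPrime p}

variable (C) in
/-- The Zariski topology on `Spec C`: the closed sets are the `V(t) = {p | t ≤ p}`,
equivalently the topology generated by the sets `D(t) = {p | t ≰ p}`. -/
def zariskiTop : TopologicalSpace (Spec C) :=
  TopologicalSpace.generateFrom {U : Set (Spec C) | ∃ t : C, U = {p : Spec C | ¬ t ≤ p.1}}

variable (C) in
/-- The flat topology on `Spec C`: generated by the open basis `V(a)`, `a` compact. -/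
def flatTop : TopologicalSpace (Spec C) :=
  TopologicalSpace.generateFrom
    {U : Set (Spec C) | ∃ a : C, IsCompactElement a ∧ U = {p : Spec C | a ≤ p.1}}

/-! Complemented elements are compact, since `⊤` is, and they are closed under finite joins and
meets. Given `t ⊔ u = ⊤`, separating each maximal `p ≥ u` from every maximal `q ≥ t` and using
compactness of `⊤` yields a complemented `b_p ≤ p` with `t ⊔ b_p = ⊤`. A second compactness
argument finds finitely many such `p` with `u ⊔ ⨆ b_p⊥ = ⊤`; then `a = ⨅ b_p` and `b = ⨆ b_p⊥`
witness B-normality. Condition (3) is equivalent to (2) because a complemented element lies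
below `O(p)` exactly when it lies below `p`. -/

theorem _root_.CompleteLattice.IsCompactElement.exists_finset_subset_sup_eq_top
    {α : Type*} [CompleteLattice α] (htop : IsCompactElement (⊤ : α)) {t : α} {S : Set α}
    (h : t ⊔ sSup S = ⊤) : ∃ F : Finset α, ↑F ⊆ S ∧ t ⊔ F.sup id = ⊤ := by
  classical
  obtain ⟨F, hFS, hF⟩ := (isCompactElement_iff_exists_le_sSup_of_le_sSup (k := (⊤ : α))).mp htop
    (insert t S) (by rw [sSup_insert, h])
  refine ⟨F.erase t, ?_, top_le_iff.mp (hF.trans (Finset.sup_le fun x hx => ?_))⟩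
  · rw [Finset.coe_erase]
    exact Set.sdiff_subset_iff.mpr hFS
  · by_cases hxt : x = t
    · exact hxt ▸ le_sup_left
    · exact le_sup_of_le_right (Finset.le_sup (f := id) (Finset.mem_erase.mpr ⟨hxt, hx⟩))

lemma comm_sup_left (a b c : C) : comm (a ⊔ b) c = comm a c ⊔ comm b c := by
  rw [← sSup_pair, comm_sSup, iSup_pair]

lemma comm_sup_right (a b c : C) : comm a (b ⊔ c) = comm a b ⊔ comm a c := by
  rw [comm_comm, comm_sup_left, comm_comm b, comm_comm c]

lemma comm_mono_left {a b : C} (c : C) (h : a ≤ b) : comm a c ≤ comm b c := by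
  rw [← sup_eq_right.mpr h, comm_sup_left]
  exact le_sup_left

lemma comm_mono_right (a : C) {b c : C} (h : b ≤ c) : comm a b ≤ comm a c := by
  rw [comm_comm a b, comm_comm a c]
  exact comm_mono_left a h

lemma comm_ann (a : C) : comm a (ann a) = ⊥ := by
  rw [comm_comm, ann, resid, comm_sSup]
  exact le_bot_iff.mp (iSup₂_le fun c hc => (comm_comm c a).trans_le hc)

lemma ann_comm_self (a : C) : comm (ann a) a = ⊥ :=
  (comm_comm _ _).trans (comm_ann a)

lemma le_ann_iff {a c : C} : c ≤ ann a ↔ comm a c = ⊥ :=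
  ⟨fun h => le_bot_iff.mp ((comm_mono_right a h).trans (comm_ann a).le), fun h => le_sSup h.le⟩

lemma le_of_sup_eq_top_of_comm_eq_bot {a b c : C} (h : b ⊔ c = ⊤) (hab : comm a b = ⊥) :
    a ≤ c :=
  calc a = comm a (b ⊔ c) := by rw [h, comm_top]
    _ = comm a b ⊔ comm a c := comm_sup_right a b c
    _ ≤ c := by
      rw [hab, bot_sup_eq]
      exact (comm_le_inf a c).trans inf_le_right

lemma inf_eq_bot_of_comm_eq_bot {a b : C} (h : a ⊔ b = ⊤) (hab : comm a b = ⊥) : a ⊓ b = ⊥ :=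
  le_bot_iff.mp <|
    calc a ⊓ b = comm (a ⊓ b) (a ⊔ b) := by rw [h, comm_top]
      _ = comm (a ⊓ b) a ⊔ comm (a ⊓ b) b := comm_sup_right _ a b
      _ ≤ comm b a ⊔ comm a b :=
        sup_le_sup (comm_mono_left a inf_le_right) (comm_mono_left b inf_le_left)
      _ = ⊥ := by rw [comm_comm b a, hab, sup_idem]

lemma ann_eq_of_comm_eq_bot {a b : C} (h : a ⊔ b = ⊤) (hab : comm a b = ⊥) : ann a = b :=
  le_antisymm (le_of_sup_eq_top_of_comm_eq_bot h (ann_comm_self a)) (le_ann_iff.mpr hab)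

lemma sup_comm_eq_top {t a b : C} (ha : t ⊔ a = ⊤) (hb : t ⊔ b = ⊤) : t ⊔ comm a b = ⊤ :=
  top_le_iff.mp <|
    calc ⊤ = comm (t ⊔ a) (t ⊔ b) := by rw [ha, hb, comm_top]
      _ = comm t (t ⊔ b) ⊔ (comm a t ⊔ comm a b) := by rw [comm_sup_left, comm_sup_right a]
      _ ≤ t ⊔ comm a b :=
        sup_le ((comm_le_inf _ _).trans (inf_le_left.trans le_sup_left))
          (sup_le_sup_right ((comm_le_inf a t).trans inf_le_right) _)

lemma sup_inf_eq_top {t a b : C} (ha : t ⊔ a = ⊤) (hb : t ⊔ b = ⊤) : t ⊔ a ⊓ b = ⊤ :=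
  eq_top_mono (sup_le_sup_left (comm_le_inf a b) t) (sup_comm_eq_top ha hb)

namespace IsComplEl

lemma of_comm_eq_bot {a b : C} (h : a ⊔ b = ⊤) (hab : comm a b = ⊥) : IsComplEl a :=
  ⟨b, h, inf_eq_bot_of_comm_eq_bot h hab⟩

lemma sup_ann {a : C} (ha : IsComplEl a) : a ⊔ ann a = ⊤ := by
  obtain ⟨b, h, hb⟩ := ha
  rwa [ann_eq_of_comm_eq_bot h (le_bot_iff.mp ((comm_le_inf a b).trans hb.le))]

lemma ann_sup {a : C} (ha : IsComplEl a) : ann a ⊔ a = ⊤ := by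
  rw [sup_comm]
  exact ha.sup_ann

lemma ann_ann {a : C} (ha : IsComplEl a) : ann (ann a) = a :=
  ann_eq_of_comm_eq_bot ha.ann_sup (ann_comm_self a)

lemma not_ann_le_of_le {a p : C} (ha : IsComplEl a) (hp : p ≠ ⊤) (hap : a ≤ p) :
    ¬ ann a ≤ p :=
  fun h => hp (eq_top_mono (sup_le hap h) ha.sup_ann)

lemma inf {a b : C} (ha : IsComplEl a) (hb : IsComplEl b) : IsComplEl (a ⊓ b) := by
  refine of_comm_eq_bot (b := ann a ⊔ ann b) ?_ ?_
  · rw [sup_comm]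
    exact sup_inf_eq_top (eq_top_mono (sup_le_sup_right le_sup_left a) ha.ann_sup)
      (eq_top_mono (sup_le_sup_right le_sup_right b) hb.ann_sup)
  · rw [comm_sup_right]
    exact le_bot_iff.mp (sup_le ((comm_mono_left _ inf_le_left).trans (comm_ann a).le)
      ((comm_mono_left _ inf_le_right).trans (comm_ann b).le))

lemma sup {a b : C} (ha : IsComplEl a) (hb : IsComplEl b) : IsComplEl (a ⊔ b) := by
  refine of_comm_eq_bot (b := ann a ⊓ ann b) ?_ ?_
  · exact sup_inf_eq_top (eq_top_mono (sup_le_sup_right le_sup_left _) ha.sup_ann)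
      (eq_top_mono (sup_le_sup_right le_sup_right _) hb.sup_ann)
  · rw [comm_sup_left]
    exact le_bot_iff.mp (sup_le ((comm_mono_right a inf_le_left).trans (comm_ann a).le)
      ((comm_mono_right b inf_le_right).trans (comm_ann b).le))

lemma finset_sup {ι : Type*} {F : Finset ι} {f : ι → C} (hf : ∀ i ∈ F, IsComplEl (f i)) :
    IsComplEl (F.sup f) :=
  Finset.sup_induction ⟨⊤, bot_sup_eq _, bot_inf_eq _⟩ (fun _ ha _ hb => ha.sup hb) hf

lemma finset_inf {ι : Type*} {F : Finset ι} {f : ι → C} (hf : ∀ i ∈ F, IsComplEl (f i)) :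
    IsComplEl (F.inf f) :=
  Finset.inf_induction ⟨⊥, sup_bot_eq _, inf_bot_eq _⟩ (fun _ ha _ hb => ha.inf hb) hf

lemma isCompactElement {a : C} (ha : IsComplEl a) : IsCompactElement a := by
  obtain ⟨s, hs, rfl⟩ := compactlyGenerated a
  obtain ⟨F, hFs, hF⟩ := top_isCompact.exists_finset_subset_sup_eq_top ha.ann_sup
  have hsF : sSup s = F.sup id :=
    le_antisymm (le_of_sup_eq_top_of_comm_eq_bot hF (comm_ann _))
      (Finset.sup_le fun x hx => le_sSup (hFs hx))
  rw [hsF]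
  exact isCompactElement_finsetSup F fun x hx => hs x (hFs hx)

end IsComplEl

lemma IsComplEl.ann {a : C} (ha : IsComplEl a) : IsComplEl (ann a) :=
  .of_comm_eq_bot ha.ann_sup (ann_comm_self a)

lemma isMaximal_iff_isCoatom {α : Type*} [CompleteLattice α] {p : α} : IsMaximal p ↔ IsCoatom p :=
  ⟨fun hp => ⟨hp.1, fun q hpq => by_contra fun hq => hpq.ne (hp.2 q hq hpq.le).symm⟩,
    fun hp => ⟨hp.1, fun _ hq hpq => (hp.le_iff_eq hq).mp hpq⟩⟩

lemma exists_isMaximal_ge {x : C} (hx : x ≠ ⊤) : ∃ m : C, IsMaximal m ∧ x ≤ m := by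
  have := coatomic_of_top_compact (top_isCompact (C := C))
  obtain ⟨m, hm, hxm⟩ := (eq_top_or_exists_le_coatom x).resolve_left hx
  exact ⟨m, isMaximal_iff_isCoatom.mpr hm, hxm⟩

lemma IsMaximal.sup_eq_top_of_not_le {α : Type*} [CompleteLattice α] {m a : α} (hm : IsMaximal m)
    (h : ¬ a ≤ m) : m ⊔ a = ⊤ :=
  codisjoint_iff.mp ((isMaximal_iff_isCoatom.mp hm).not_le_iff_codisjoint.mp h)

lemma IsMaximal.isPrime {m : C} (hm : IsMaximal m) : IsPrime m := by
  refine ⟨hm.1, fun a b hab => ?_⟩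
  by_contra! h
  exact hm.1 ((sup_eq_left.mpr hab).symm.trans
    (sup_comm_eq_top (hm.sup_eq_top_of_not_le h.1) (hm.sup_eq_top_of_not_le h.2)))

lemma IsPrime.ann_le_of_sup_eq_top {p a : C} (hp : IsPrime p) (h : p ⊔ a = ⊤) : ann a ≤ p :=
  (hp.2 a (ann a) ((comm_ann a).trans_le bot_le)).resolve_left
    fun hap => hp.1 ((sup_eq_left.mpr hap).symm.trans h)

lemma O_le {p : C} (hp : IsPrime p) : O p ≤ p :=
  sSup_le fun a ⟨_, ha⟩ => (hp.2 a (ann a) ((comm_ann a).trans_le bot_le)).resolve_right ha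

lemma IsComplEl.le_O_iff {a p : C} (ha : IsComplEl a) (hp : IsPrime p) : a ≤ O p ↔ a ≤ p :=
  ⟨fun h => h.trans (O_le hp), fun h => le_sSup ⟨ha.isCompactElement, ha.not_ann_le_of_le hp.1 h⟩⟩

lemma exists_finset_sup_eq_top_of_forall_isMaximal {t : C} {S : Set C}
    (h : ∀ m, IsMaximal m → t ≤ m → ∃ x ∈ S, ¬ x ≤ m) :
    ∃ F : Finset C, ↑F ⊆ S ∧ t ⊔ F.sup id = ⊤ := by
  refine top_isCompact.exists_finset_subset_sup_eq_top (by_contra fun hne => ?_)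
  obtain ⟨m, hm, hle⟩ := exists_isMaximal_ge hne
  obtain ⟨x, hxS, hxm⟩ := h m hm (le_sup_left.trans hle)
  exact hxm ((le_sSup hxS).trans (le_sup_right.trans hle))

/-- Condition (2) of the theorem is `ComplSeparated id`, condition (3) is `ComplSeparated O`. -/
def ComplSeparated (f : C → C) : Prop :=
  ∀ p q : C, IsMaximal p → IsMaximal q → p ≠ q → ∃ a : C, IsComplEl a ∧ a ≤ f p ∧ ann a ≤ f q

lemma complSeparated_O_iff : ComplSeparated (O : C → C) ↔ ComplSeparated (id : C → C) :=
  forall₄_congr fun _ _ hp hq => imp_congr_right fun _ => exists_congr fun _ =>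
    and_congr_right fun ha => and_congr (ha.le_O_iff hp.isPrime) (ha.ann.le_O_iff hq.isPrime)

lemma BNormal.complSeparated (h : BNormal C) : ComplSeparated (id : C → C) := by
  intro p q hp hq hpq
  obtain ⟨a, b, ha, -, hpa, hqb, hab⟩ :=
    h p q ((isMaximal_iff_isCoatom.mp hp).sup_eq_top_of_ne (isMaximal_iff_isCoatom.mp hq) hpq)
  refine ⟨ann a, ha.ann, hp.isPrime.ann_le_of_sup_eq_top hpa, ?_⟩
  calc ann (ann a) = a := ha.ann_ann
    _ ≤ ann b := le_ann_iff.mpr (by rw [comm_comm, hab])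
    _ ≤ q := hq.isPrime.ann_le_of_sup_eq_top hqb

lemma ComplSeparated.exists_isComplEl_le (hsep : ComplSeparated (id : C → C)) {t u p : C}
    (htu : t ⊔ u = ⊤) (hp : IsMaximal p) (hup : u ≤ p) :
    ∃ b : C, IsComplEl b ∧ b ≤ p ∧ t ⊔ b = ⊤ := by
  have hcover : ∀ q, IsMaximal q → t ≤ q → ∃ a ∈ {a | IsComplEl a ∧ a ≤ p}, ¬ a ≤ q := by
    intro q hq htq
    have hpq : p ≠ q := by
      rintro rfl
      exact hp.1 (eq_top_mono (sup_le htq hup) htu)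
    obtain ⟨a, ha, hap, haq⟩ := hsep p q hp hq hpq
    exact ⟨a, ⟨ha, hap⟩, fun haq' => ha.not_ann_le_of_le hq.1 haq' haq⟩
  obtain ⟨F, hFS, htF⟩ := exists_finset_sup_eq_top_of_forall_isMaximal hcover
  exact ⟨F.sup id, IsComplEl.finset_sup fun x hx => (hFS hx).1,
    Finset.sup_le fun x hx => (hFS hx).2, htF⟩

lemma ComplSeparated.bNormal (hsep : ComplSeparated (id : C → C)) : BNormal C := by
  intro t u htu
  have hcover : ∀ p, IsMaximal p → u ≤ p →
      ∃ x ∈ {x | IsComplEl x ∧ t ⊔ ann x = ⊤}, ¬ x ≤ p := by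
    intro p hp hup
    obtain ⟨b, hb, hbp, htb⟩ := hsep.exists_isComplEl_le htu hp hup
    exact ⟨ann b, ⟨hb.ann, by rwa [hb.ann_ann]⟩, hb.not_ann_le_of_le hp.1 hbp⟩
  obtain ⟨F, hFS, huF⟩ := exists_finset_sup_eq_top_of_forall_isMaximal hcover
  refine ⟨F.inf ann, F.sup id, IsComplEl.finset_inf fun x hx => (hFS hx).1.ann,
    IsComplEl.finset_sup fun x hx => (hFS hx).1, ?_, huF, ?_⟩
  · exact Finset.inf_induction (p := fun a => t ⊔ a = ⊤) (sup_top_eq t)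
      (fun _ ha _ hb => sup_inf_eq_top ha hb) fun x hx => (hFS hx).2
  · rw [← le_ann_iff]
    exact Finset.sup_le fun x hx => le_ann_iff.mpr
      (le_bot_iff.mp ((comm_mono_left x (Finset.inf_le hx)).trans (ann_comm_self x).le))

theorem statement10_general :
    (BNormal C ↔ ∀ p q : C, IsMaximal p → IsMaximal q → p ≠ q →
      ∃ a : C, IsComplEl a ∧ a ≤ p ∧ ann a ≤ q) ∧
    (BNormal C ↔ ∀ p q : C, IsMaximal p → IsMaximal q → p ≠ q →
      ∃ a : C, IsComplEl a ∧ a ≤ O p ∧ ann a ≤ O q) := by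
  have h12 : BNormal C ↔ ComplSeparated (id : C → C) :=
    ⟨BNormal.complSeparated, ComplSeparated.bNormal⟩
  exact ⟨h12, h12.trans complSeparated_O_iff.symm⟩

theorem statement10 (hstar : Star C) :
    (BNormal C ↔ ∀ p q : C, IsMaximal p → IsMaximal q → p ≠ q →
      ∃ a : C, IsComplEl a ∧ a ≤ p ∧ ann a ≤ q) ∧
    (BNormal C ↔ ∀ p q : C, IsMaximal p → IsMaximal q → p ≠ q →
      ∃ a : C, IsComplEl a ∧ a ≤ O p ∧ ann a ≤ O q) :=
  statement10_general

end CommutatorLattice
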